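/- Let (X, τ) be a non-compact, locally compact Hausdorff topological space. Then the space (X, τ^G) equipped with the de Groot dual topology is compact and superconnected, i.e. any two nonempty τ^G-open sets have nonempty intersection. -/

import Mathlib

/-- A set is saturated if it is an intersection of open sets. -/
def IsSaturatedSet {X : Type*} (t : TopologicalSpace X) (s : Set X) : Prop :=
  ∃ F : Set (Set X), (∀ u ∈ F, t.IsOpen u) ∧ s = ⋂₀ F

/-- The de Groot dual (co-compact) topology: the topology whose closed sets are
generated by the family of all compact saturated sets used as a base for closed sets. -/
def deGrootDual {X : Type*} (t : TopologicalSpace X) : TopologicalSpace X :=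
  TopologicalSpace.generateFrom
    {v : Set X | ∃ k : Set X, @IsCompact X t k ∧ IsSaturatedSet t k ∧ v = kᶜ}

/-!
Every nonempty dual-open set contains `kᶜ` for some compact `k`. Compact sets of a Hausdorff
space are closed, so the dual topology is coarser than the original one; hence in a dual-open
cover one member contains some `kᶜ` and finitely many others cover `k`. Two nonempty dual-open
sets contain `k₁ᶜ` and `k₂ᶜ`, which meet because the compact set `k₁ ∪ k₂` cannot be all of the
non-compact space.
-/

open Set

section deGrootDual

variable {X : Type*} [t : TopologicalSpace X]

theorem exists_isCompact_compl_subset_of_isOpen_deGrootDual {u : Set X}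
    (hu : (deGrootDual t).IsOpen u) {x : X} (hx : x ∈ u) :
    ∃ k, IsCompact k ∧ kᶜ ⊆ u := by
  induction hu generalizing x with
  | basic s hs =>
    obtain ⟨k, hk, -, rfl⟩ := hs
    exact ⟨k, hk, subset_rfl⟩
  | univ => exact ⟨∅, isCompact_empty, subset_univ _⟩
  | inter s₁ s₂ _ _ ih₁ ih₂ =>
    obtain ⟨k₁, hk₁, hk₁s⟩ := ih₁ hx.1
    obtain ⟨k₂, hk₂, hk₂s⟩ := ih₂ hx.2
    refine ⟨k₁ ∪ k₂, hk₁.union hk₂, ?_⟩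
    rw [compl_union]
    exact inter_subset_inter hk₁s hk₂s
  | sUnion S _ ih =>
    obtain ⟨s, hsS, hxs⟩ := hx
    obtain ⟨k, hk, hks⟩ := ih s hsS hxs
    exact ⟨k, hk, hks.trans (subset_sUnion_of_mem hsS)⟩

theorem le_deGrootDual [T2Space X] : t ≤ deGrootDual t :=
  le_generateFrom fun _ ⟨_, hk, _, hv⟩ => hv ▸ hk.isClosed.isOpen_compl

theorem compactSpace_deGrootDual [T2Space X] : @CompactSpace X (deGrootDual t) := by
  refine @CompactSpace.mk X (deGrootDual t) <|
    @isCompact_of_finite_subcover X (deGrootDual t) univ fun U hU hcover => ?_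
  classical
  rcases isEmpty_or_nonempty X with _ | ⟨⟨x₀⟩⟩
  · exact ⟨∅, fun x => isEmptyElim x⟩
  obtain ⟨i₀, hx₀⟩ := mem_iUnion.mp (hcover (mem_univ x₀))
  obtain ⟨k, hk, hki₀⟩ := exists_isCompact_compl_subset_of_isOpen_deGrootDual (hU i₀) hx₀
  obtain ⟨F, hkF⟩ := hk.elim_finite_subcover U (fun i => le_deGrootDual _ (hU i))
    fun y _ => hcover (mem_univ y)
  refine ⟨insert i₀ F, fun z _ => ?_⟩
  rw [Finset.set_biUnion_insert]
  by_cases hz : z ∈ k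
  exacts [Or.inr (hkF hz), Or.inl (hki₀ hz)]

theorem preirreducibleSpace_deGrootDual (hnc : ¬ CompactSpace X) :
    @PreirreducibleSpace X (deGrootDual t) := by
  refine @PreirreducibleSpace.of_forall_nonempty_inter X (deGrootDual t) ?_
  rintro u v hu hv ⟨x, hx⟩ ⟨y, hy⟩
  obtain ⟨k₁, hk₁, hk₁u⟩ := exists_isCompact_compl_subset_of_isOpen_deGrootDual hu hx
  obtain ⟨k₂, hk₂, hk₂v⟩ := exists_isCompact_compl_subset_of_isOpen_deGrootDual hv hy
  obtain ⟨z, hz⟩ : (k₁ ∪ k₂)ᶜ.Nonempty :=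
    nonempty_compl.mpr fun h => hnc ⟨h ▸ hk₁.union hk₂⟩
  rw [compl_union] at hz
  exact ⟨z, hk₁u hz.1, hk₂v hz.2⟩

end deGrootDual

theorem deGrootDual_compact_superconnected_general {X : Type*} (t : TopologicalSpace X)
    (h2 : @T2Space X t) (hnc : ¬ @CompactSpace X t) :
    @CompactSpace X (deGrootDual t) ∧
    ∀ u v : Set X, (deGrootDual t).IsOpen u → (deGrootDual t).IsOpen v →
      u.Nonempty → v.Nonempty → (u ∩ v).Nonempty :=
  ⟨compactSpace_deGrootDual, fun _ _ =>
    @nonempty_preirreducible_inter X (deGrootDual t) _ _ (preirreducibleSpace_deGrootDual hnc)⟩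

/-- For a non-compact, locally compact Hausdorff space `(X, τ)`, the space equipped with
the de Groot dual topology `τ^G` is compact and superconnected (any two nonempty
`τ^G`-open sets meet). -/
theorem deGrootDual_compact_superconnected {X : Type*} (t : TopologicalSpace X)
    (h2 : @T2Space X t) (hlc : @LocallyCompactSpace X t) (hnc : ¬ @CompactSpace X t) :
    @CompactSpace X (deGrootDual t) ∧
    ∀ u v : Set X, (deGrootDual t).IsOpen u → (deGrootDual t).IsOpen v →
      u.Nonempty → v.Nonempty → (u ∩ v).Nonempty :=
  deGrootDual_compact_superconnected_general t h2 hnc
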